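/- arXiv:1912.09560 — 6 statements merged into one kernel-verified Lean document; each statement's English description precedes it below -/
import Mathlib

section
/- Gamma mixture representation: for all σ > 0, a > 0, b > 0 and y > 0, ∫_0^∞ [ √θ/(√(2π)·σ) · y^{-(1/(2σ)+1)} · exp(-(θ/2)·y^{-1/σ}) ] · [ b^a/Γ(a) · θ^{a-1} · exp(-bθ) ] dθ = (2b)^a / (σ·B(a,1/2)) · y^{-(1/(2σ)+1)} / (y^{-1/σ} + 2b)^{a+1/2}; that is, mixing the generalized log-Moyal density GlogM(θ,σ) over θ with a Gamma(a,b) density yields the GLMGA(σ,a,b) density. -/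
open MeasureTheory Real Filter Topology

/-- The (real) beta function `B(m,n) = ∫_0^1 t^(m-1) (1-t)^(n-1) dt`. -/
noncomputable def betaFn (m n : ℝ) : ℝ :=
  ∫ t in (0:ℝ)..1, t ^ (m - 1) * (1 - t) ^ (n - 1)

/-- The regularized incomplete beta function `I_{m,n}(v)`. -/
noncomputable def regIncBeta (m n v : ℝ) : ℝ :=
  (∫ t in (0:ℝ)..v, t ^ (m - 1) * (1 - t) ^ (n - 1)) / betaFn m n

/-- The GLMGA density `f_{σ,a,b}`. -/
noncomputable def glmga (σ a b y : ℝ) : ℝ :=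
  (2 * b) ^ a / (σ * betaFn a (1 / 2)) * y ^ (-(1 / (2 * σ) + 1))
    / (y ^ (-1 / σ) + 2 * b) ^ (a + 1 / 2)

/-!
Multiplying the two densities leaves, up to a constant, the Gamma kernel
`θ ^ (a + 1/2 - 1) * exp (-(b + y ^ (-1/σ) / 2) * θ)`, whose integral is
`Γ(a + 1/2) / (b + y ^ (-1/σ) / 2) ^ (a + 1/2)`. The Gamma factors that remain combine into
`B(a, 1/2) = Γ(a) Γ(1/2) / Γ(a + 1/2)` with `Γ(1/2) = √π`.
-/

lemma ofReal_betaFn (m n : ℝ) : (betaFn m n : ℂ) = Complex.betaIntegral m n := by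
  rw [betaFn, Complex.betaIntegral, ← intervalIntegral.integral_ofReal]
  refine intervalIntegral.integral_congr fun t ht ↦ ?_
  rw [Set.uIcc_of_le zero_le_one] at ht
  push_cast [Complex.ofReal_cpow ht.1, Complex.ofReal_cpow (sub_nonneg.2 ht.2)]
  rfl

lemma betaFn_eq_beta {m n : ℝ} (hm : 0 < m) (hn : 0 < n) :
    betaFn m n = ProbabilityTheory.beta m n := by
  rw [ProbabilityTheory.beta_eq_betaIntegralReal m n hm hn, ← ofReal_betaFn, Complex.ofReal_re]

lemma integral_sqrt_mul_exp_mul_gamma_density {a b c : ℝ} (ha : 0 < a) (hbc : 0 < b + c) :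
    ∫ θ in Set.Ioi (0:ℝ), √θ * exp (-(c * θ)) * (b ^ a / Gamma a * θ ^ (a - 1) * exp (-(b * θ)))
      = b ^ a / Gamma a * Gamma (a + 1 / 2) / (b + c) ^ (a + 1 / 2) := by
  have h : ∀ θ ∈ Set.Ioi (0:ℝ),
      √θ * exp (-(c * θ)) * (b ^ a / Gamma a * θ ^ (a - 1) * exp (-(b * θ)))
        = b ^ a / Gamma a * (θ ^ (a + 1 / 2 - 1) * exp (-((b + c) * θ))) := by
    intro θ (hθ : 0 < θ)
    rw [sqrt_eq_rpow, show a + 1 / 2 - 1 = 1 / 2 + (a - 1) by ring, rpow_add hθ, add_mul,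
      neg_add, exp_add]
    ring
  rw [setIntegral_congr_fun measurableSet_Ioi h, integral_const_mul,
    integral_rpow_mul_exp_neg_mul_Ioi (by linarith) hbc, div_rpow zero_le_one hbc.le, one_rpow]
  ring

theorem glmga_gamma_mixture_general (σ a b y : ℝ) (ha : 0 < a) (hb : 0 < b)
    (hy : 0 < y) :
    ∫ θ in Set.Ioi (0:ℝ),
      (Real.sqrt θ / (Real.sqrt (2 * π) * σ) * y ^ (-(1 / (2 * σ) + 1)) *
        Real.exp (-(θ / 2) * y ^ (-1 / σ))) *
      (b ^ a / Real.Gamma a * θ ^ (a - 1) * Real.exp (-(b * θ)))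
      = glmga σ a b y := by
  rw [glmga]
  set u := y ^ (-1 / σ)
  set Y := y ^ (-(1 / (2 * σ) + 1))
  have hu : 0 < u := by positivity
  have hmix : ∀ θ : ℝ,
      (√θ / (√(2 * π) * σ) * Y * exp (-(θ / 2) * u)) *
        (b ^ a / Gamma a * θ ^ (a - 1) * exp (-(b * θ)))
      = Y / (√(2 * π) * σ) *
        (√θ * exp (-(u / 2 * θ)) * (b ^ a / Gamma a * θ ^ (a - 1) * exp (-(b * θ)))) := by
    intro θ
    rw [show -(θ / 2) * u = -(u / 2 * θ) by ring]
    ring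
  simp_rw [hmix]
  rw [integral_const_mul, integral_sqrt_mul_exp_mul_gamma_density ha (by positivity),
    betaFn_eq_beta ha one_half_pos, ProbabilityTheory.beta, Gamma_one_half_eq]
  have h2b : (2 * b) ^ a = 2 ^ a * b ^ a := mul_rpow zero_le_two hb.le
  have hscale : (u + 2 * b) ^ (a + 1 / 2) = 2 ^ a * √2 * (b + u / 2) ^ (a + 1 / 2) := by
    rw [show u + 2 * b = 2 * (b + u / 2) by ring, mul_rpow zero_le_two (by positivity),
      rpow_add zero_lt_two, sqrt_eq_rpow]
  have hΓa := (Gamma_pos_of_pos ha).ne'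
  have hΓ := (Gamma_pos_of_pos (by positivity : 0 < a + 1 / 2)).ne'
  rw [h2b, hscale, sqrt_mul zero_le_two]
  clear_value u Y
  field_simp

/-- gamma mixture representation of the GLMGA density. -/
theorem glmga_gamma_mixture (σ a b y : ℝ) (hσ : 0 < σ) (ha : 0 < a) (hb : 0 < b)
    (hy : 0 < y) :
    ∫ θ in Set.Ioi (0:ℝ),
      (Real.sqrt θ / (Real.sqrt (2 * π) * σ) * y ^ (-(1 / (2 * σ) + 1)) *
        Real.exp (-(θ / 2) * y ^ (-1 / σ))) *
      (b ^ a / Real.Gamma a * θ ^ (a - 1) * Real.exp (-(b * θ)))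
      = glmga σ a b y :=
  glmga_gamma_mixture_general σ a b y ha hb hy
end

section
/- Cumulative distribution function of the GLMGA distribution: for all σ > 0, a > 0, b > 0 and y > 0, ∫_0^y f_{σ,a,b}(t) dt = 1 − I_{1/2,a}( y^{-1/σ} / (y^{-1/σ} + 2b) ), where I_{m,n}(v) is the regularized incomplete beta function. -/
/-!
The map `w(y) = (1 + 2b y^{1/σ})⁻¹` equals `y^{-1/σ} / (y^{-1/σ} + 2b)` for `y > 0` and extends
continuously to `w(0) = 1`, so `G = 1 - I_{1/2,a} ∘ w` is continuous on `[0, ∞)` with `G(0) = 0`.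
The chain rule, with `I_{1/2,a}' (v) = v^{-1/2} (1-v)^{a-1} / B(1/2,a)`, gives `G' = f_{σ,a,b}` on
`(0, ∞)`. Being nonnegative, the density is integrable on `[0, y]`, and the fundamental theorem of
calculus gives `∫_0^y f = G(y) - G(0)`.
-/

open MeasureTheory Real Filter Topology

open Set

theorem intervalIntegrable_beta_integrand {m n : ℝ} (hm : 0 < m) (hn : 0 < n) :
    IntervalIntegrable (fun t : ℝ => t ^ (m - 1) * (1 - t) ^ (n - 1)) volume 0 1 := by
  refine IntervalIntegrable.trans (b := 1 / 2) ?_ ?_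
  · refine (intervalIntegral.intervalIntegrable_rpow' (by linarith)).mul_continuousOn ?_
    refine (continuousOn_const.sub continuousOn_id).rpow_const fun t ht =>
      Or.inl (show (1 : ℝ) - t ≠ 0 from ?_)
    rw [uIcc_of_le (by norm_num)] at ht
    linarith [ht.2]
  · refine IntervalIntegrable.continuousOn_mul ?_ ?_
    · have := ((intervalIntegral.intervalIntegrable_rpow' (r := n - 1) (by linarith)).comp_sub_left
        1 : IntervalIntegrable _ volume (1 - 0) (1 - 1 / 2))
      norm_num at this
      exact this.symm
    · refine continuousOn_id.rpow_const fun t ht => Or.inl ?_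
      rw [uIcc_of_le (by norm_num)] at ht
      exact (lt_of_lt_of_le (by norm_num) ht.1).ne'

theorem betaFn_pos {m n : ℝ} (hm : 0 < m) (hn : 0 < n) : 0 < betaFn m n :=
  intervalIntegral.intervalIntegral_pos_of_pos_on (intervalIntegrable_beta_integrand hm hn)
    (fun _ ht => mul_pos (rpow_pos_of_pos ht.1 _) (rpow_pos_of_pos (sub_pos.2 ht.2) _)) one_pos

theorem betaFn_comm (m n : ℝ) : betaFn m n = betaFn n m := by
  have h := intervalIntegral.integral_comp_sub_left
    (fun t : ℝ => t ^ (n - 1) * (1 - t) ^ (m - 1)) (a := 0) (b := 1) 1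
  simp only [sub_zero, sub_self, sub_sub_cancel] at h
  rw [betaFn, betaFn, ← h]
  simp only [mul_comm]

theorem regIncBeta_one {m n : ℝ} (hm : 0 < m) (hn : 0 < n) : regIncBeta m n 1 = 1 :=
  div_self (betaFn_pos hm hn).ne'

theorem continuousOn_regIncBeta {m n : ℝ} (hm : 0 < m) (hn : 0 < n) :
    ContinuousOn (regIncBeta m n) (Icc 0 1) := by
  have := intervalIntegral.continuousOn_primitive_interval'
    (intervalIntegrable_beta_integrand hm hn) left_mem_uIcc
  rw [uIcc_of_le zero_le_one] at this
  exact this.div_const _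

theorem hasDerivAt_regIncBeta {m n v : ℝ} (hm : 0 < m) (hn : 0 < n) (hv : v ∈ Ioo 0 1) :
    HasDerivAt (regIncBeta m n) (v ^ (m - 1) * (1 - v) ^ (n - 1) / betaFn m n) v := by
  have hcont : ContinuousOn (fun t : ℝ => t ^ (m - 1) * (1 - t) ^ (n - 1)) (Ioo 0 1) :=
    (continuousOn_id.rpow_const fun t ht => Or.inl ht.1.ne').mul
      ((continuousOn_const.sub continuousOn_id).rpow_const fun t ht => Or.inl (sub_pos.2 ht.2).ne')
  have hint := (intervalIntegrable_beta_integrand hm hn).mono_set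
    (uIcc_subset_uIcc left_mem_uIcc (Ioo_subset_Icc_self.trans Icc_subset_uIcc hv))
  exact (intervalIntegral.integral_hasDerivAt_right hint
    (hcont.stronglyMeasurableAtFilter isOpen_Ioo _ hv)
    (hcont.continuousAt (isOpen_Ioo.mem_nhds hv))).div_const _

/-- `y^{-1/σ} / (y^{-1/σ} + 2b)` rewritten as `(1 + 2b y^{1/σ})⁻¹`, which is continuous at
`y = 0` with value `1`; the original form takes the junk value `0` there. -/
noncomputable def glmgaBetaArg (σ b y : ℝ) : ℝ := (1 + 2 * b * y ^ (1 / σ))⁻¹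

section glmgaBetaArg

variable {σ b y : ℝ}

theorem glmgaBetaArg_eq (hy : 0 < y) :
    glmgaBetaArg σ b y = y ^ (-1 / σ) / (y ^ (-1 / σ) + 2 * b) := by
  have hpos : 0 < y ^ (1 / σ) := rpow_pos_of_pos hy _
  rw [glmgaBetaArg, neg_div, rpow_neg hy.le]
  field_simp

theorem glmgaBetaArg_zero (hσ : 0 < σ) : glmgaBetaArg σ b 0 = 1 := by
  rw [glmgaBetaArg, zero_rpow (one_div_pos.2 hσ).ne']
  norm_num

theorem glmgaBetaArg_mem_Icc (hb : 0 < b) (hy : 0 ≤ y) : glmgaBetaArg σ b y ∈ Icc 0 1 := by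
  have : 0 ≤ 2 * b * y ^ (1 / σ) := by positivity
  exact ⟨by unfold glmgaBetaArg; positivity, inv_le_one_of_one_le₀ (by linarith)⟩

theorem glmgaBetaArg_mem_Ioo (hb : 0 < b) (hy : 0 < y) : glmgaBetaArg σ b y ∈ Ioo 0 1 := by
  have : 0 < 2 * b * y ^ (1 / σ) := by positivity
  exact ⟨by unfold glmgaBetaArg; positivity, inv_lt_one_of_one_lt₀ (by linarith)⟩

theorem continuousOn_glmgaBetaArg (hσ : 0 < σ) (hb : 0 < b) :
    ContinuousOn (glmgaBetaArg σ b) (Ici 0) := by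
  refine ContinuousOn.inv₀ (continuousOn_const.add (continuousOn_const.mul
    (continuousOn_id.rpow_const fun _ _ => Or.inr (one_div_pos.2 hσ).le))) fun t ht => ?_
  have : 0 ≤ 2 * b * t ^ (1 / σ) := by have := mem_Ici.1 ht; positivity
  exact (by linarith : (0 : ℝ) < 1 + 2 * b * t ^ (1 / σ)).ne'

theorem hasDerivAt_glmgaBetaArg (hb : 0 < b) (hy : 0 < y) :
    HasDerivAt (glmgaBetaArg σ b)
      (-(2 * b * (1 / σ * y ^ (1 / σ - 1))) / (1 + 2 * b * y ^ (1 / σ)) ^ 2) y := by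
  have hD : 0 < 1 + 2 * b * y ^ (1 / σ) := by positivity
  exact (((hasDerivAt_rpow_const (Or.inl hy.ne')).const_mul (2 * b)).const_add 1).inv hD.ne'

end glmgaBetaArg

noncomputable def glmgaCDF (σ a b y : ℝ) : ℝ := 1 - regIncBeta (1 / 2) a (glmgaBetaArg σ b y)

section glmgaCDF

variable {σ a b y : ℝ}

theorem glmgaCDF_zero (hσ : 0 < σ) (ha : 0 < a) : glmgaCDF σ a b 0 = 0 := by
  rw [glmgaCDF, glmgaBetaArg_zero hσ, regIncBeta_one one_half_pos ha, sub_self]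

theorem continuousOn_glmgaCDF (hσ : 0 < σ) (ha : 0 < a) (hb : 0 < b) :
    ContinuousOn (glmgaCDF σ a b) (Ici 0) :=
  continuousOn_const.sub ((continuousOn_regIncBeta one_half_pos ha).comp
    (continuousOn_glmgaBetaArg hσ hb) fun _ ht => glmgaBetaArg_mem_Icc hb ht)

theorem glmga_eq_of_pos (hb : 0 < b) (hy : 0 < y) :
    glmga σ a b y = (2 * b) ^ a / (σ * betaFn a (1 / 2)) * y ^ (a / σ - 1)
      / (1 + 2 * b * y ^ (1 / σ)) ^ (a + 1 / 2) := by
  have hsplit : y ^ (-1 / σ) + 2 * b = y ^ (-1 / σ) * (1 + 2 * b * y ^ (1 / σ)) := by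
    rw [mul_add, mul_one, mul_left_comm, ← rpow_add hy, neg_div, neg_add_cancel, rpow_zero,
      mul_one]
  have hexp : y ^ (-(1 / (2 * σ) + 1)) = y ^ (a / σ - 1) * y ^ (-1 / σ * (a + 1 / 2)) := by
    rw [← rpow_add hy]
    ring_nf
  rw [glmga, hsplit, mul_rpow (rpow_nonneg hy.le _) (by positivity), ← rpow_mul hy.le, hexp]
  field_simp

theorem glmga_nonneg (hσ : 0 < σ) (ha : 0 < a) (hb : 0 < b) (hy : 0 ≤ y) :
    0 ≤ glmga σ a b y := by
  have := betaFn_pos ha one_half_pos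
  unfold glmga
  positivity

theorem hasDerivAt_glmgaCDF (ha : 0 < a) (hb : 0 < b) (hy : 0 < y) :
    HasDerivAt (glmgaCDF σ a b) (glmga σ a b y) y := by
  set D := 1 + 2 * b * y ^ (1 / σ) with hD_def
  have hD : 0 < D := by positivity
  have hsqrt : (D⁻¹) ^ ((1 : ℝ) / 2 - 1) = D / D ^ ((1 : ℝ) / 2) := by
    rw [inv_rpow hD.le, ← rpow_neg hD.le, eq_div_iff (rpow_pos_of_pos hD _).ne', ← rpow_add hD]
    norm_num
  have hcompl : 1 - D⁻¹ = 2 * b * y ^ (1 / σ) / D := by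
    field_simp
    ring
  have hpow : (2 * b * y ^ (1 / σ) / D) ^ (a - 1)
      = (2 * b) ^ (a - 1) * y ^ (1 / σ * (a - 1)) / D ^ (a - 1) := by
    rw [div_rpow (by positivity) hD.le, mul_rpow (by positivity) (by positivity), rpow_mul hy.le]
  have h2b : (2 * b) ^ a = (2 * b) ^ (a - 1) * (2 * b) := by
    rw [← rpow_add_one (by positivity), sub_add_cancel]
  have hy_pow : y ^ (a / σ - 1) = y ^ (1 / σ * (a - 1)) * y ^ (1 / σ - 1) := by
    rw [← rpow_add hy]
    ring_nf
  have hD_pow : D ^ (a + 1 / 2) = D ^ (a - 1) * D * D ^ ((1 : ℝ) / 2) := by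
    rw [← rpow_add_one hD.ne', ← rpow_add hD]
    ring_nf
  refine (((hasDerivAt_regIncBeta one_half_pos ha (glmgaBetaArg_mem_Ioo hb hy)).comp y
    (hasDerivAt_glmgaBetaArg hb hy)).const_sub 1).congr_deriv ?_
  rw [glmga_eq_of_pos hb hy, betaFn_comm, glmgaBetaArg, ← hD_def, hsqrt, hcompl, hpow, h2b,
    hy_pow, hD_pow]
  field_simp

end glmgaCDF

/-- cumulative distribution function of the GLMGA distribution. -/
theorem glmga_cdf (σ a b y : ℝ) (hσ : 0 < σ) (ha : 0 < a) (hb : 0 < b) (hy : 0 < y) :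
    ∫ t in (0:ℝ)..y, glmga σ a b t
      = 1 - regIncBeta (1 / 2) a (y ^ (-1 / σ) / (y ^ (-1 / σ) + 2 * b)) := by
  have hcont : ContinuousOn (glmgaCDF σ a b) (Icc 0 y) :=
    (continuousOn_glmgaCDF hσ ha hb).mono Icc_subset_Ici_self
  have hderiv : ∀ t ∈ Ioo 0 y, HasDerivAt (glmgaCDF σ a b) (glmga σ a b t) t :=
    fun t ht => hasDerivAt_glmgaCDF ha hb ht.1
  have hint : IntervalIntegrable (glmga σ a b) volume 0 y :=
    (intervalIntegrable_iff_integrableOn_Ioc_of_le hy.le).2 <|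
      intervalIntegral.integrableOn_deriv_of_nonneg hcont hderiv
        fun t ht => glmga_nonneg hσ ha hb ht.1.le
  rw [intervalIntegral.integral_eq_sub_of_hasDerivAt_of_le hy.le hcont hderiv hint,
    glmgaCDF_zero hσ ha, sub_zero, glmgaCDF, glmgaBetaArg_eq hy]
end

section
/- First-order Pareto-type tail behaviour of the GLMGA distribution: for all σ, a, b > 0, letting F̄(y) = ∫_y^∞ f_{σ,a,b}(t) dt denote the survival function, one has lim_{y→∞} y^{1/(2σ)} · F̄(y) = 2 / ( (2b)^{1/2} · B(a, 1/2) ). In particular the GLMGA distribution is regularly varying at infinity with extreme value index 2σ. -/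
/-! For `t > 0` the density factors as `C · t^(-(p+1)) · h t` with `p = 1/(2σ)`,
`C = (2b)^a / (σ B(a,1/2))` and `h t = (t^(-1/σ) + 2b)^(-(a+1/2))`, which increases to
`L = (2b)^(-(a+1/2))`. Since `y^p ∫_y^∞ t^(-(p+1)) dt = 1/p`, the bounds `h y ≤ h ≤ L` on `(y, ∞)`
squeeze `y^p F̄(y)` between `C h(y)/p` and `C L/p`, and both tend to `C L/p = 2/((2b)^(1/2) B(a,1/2))`. -/

open MeasureTheory Real Filter Topology

open Set

section RegularVariation

variable {p L : ℝ} {h : ℝ → ℝ}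

lemma integral_Ioi_rpow_neg_add_one (hp : 0 < p) {y : ℝ} (hy : 0 < y) :
    ∫ t in Ioi y, t ^ (-(p + 1)) = y ^ (-p) / p := by
  rw [integral_Ioi_rpow_of_lt (by linarith) hy, show -(p + 1) + 1 = -p by ring, neg_div_neg_eq]

lemma MonotoneOn.le_of_tendsto_Ioi (hmono : MonotoneOn h (Ioi 0))
    (hlim : Tendsto h atTop (𝓝 L)) {t : ℝ} (ht : 0 < t) : h t ≤ L :=
  ge_of_tendsto hlim <| (eventually_ge_atTop t).mono fun _ hs =>
    hmono ht (ht.trans_le hs) hs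

lemma integrableOn_Ioi_rpow_neg_add_one_mul (hp : 0 < p) (hmono : MonotoneOn h (Ioi 0))
    (hlim : Tendsto h atTop (𝓝 L)) {y : ℝ} (hy : 0 < y) :
    IntegrableOn (fun t => t ^ (-(p + 1)) * h t) (Ioi y) := by
  refine (integrableOn_Ioi_rpow_of_lt (by linarith) hy).mul_bdd (c := max |h y| |L|) ?_ ?_
  · exact (aemeasurable_restrict_of_monotoneOn measurableSet_Ioi
      (hmono.mono fun t ht => hy.trans ht)).aestronglyMeasurable
  · filter_upwards [ae_restrict_mem measurableSet_Ioi] with t ht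
    exact abs_le_max_abs_abs (hmono hy (hy.trans ht) ht.le)
      (hmono.le_of_tendsto_Ioi hlim (hy.trans ht))

lemma rpow_mul_integral_Ioi_mem_Icc (hp : 0 < p) (hmono : MonotoneOn h (Ioi 0))
    (hlim : Tendsto h atTop (𝓝 L)) {y : ℝ} (hy : 0 < y) :
    y ^ p * ∫ t in Ioi y, t ^ (-(p + 1)) * h t ∈ Icc (h y / p) (L / p) := by
  have hint := integrableOn_Ioi_rpow_neg_add_one_mul hp hmono hlim hy
  have hpow := integrableOn_Ioi_rpow_of_lt (by linarith : -(p + 1) < -1) hy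
  have hscale : ∀ c : ℝ, y ^ p * ∫ t in Ioi y, t ^ (-(p + 1)) * c = c / p := fun c => by
    rw [integral_mul_const, integral_Ioi_rpow_neg_add_one hp hy, ← mul_assoc, mul_div_assoc',
      ← rpow_add hy, add_neg_cancel, rpow_zero]
    ring
  have hpos : 0 ≤ y ^ p := (rpow_pos_of_pos hy p).le
  constructor
  · rw [← hscale]
    refine mul_le_mul_of_nonneg_left (setIntegral_mono_on (hpow.mul_const _) hint
      measurableSet_Ioi fun t ht => ?_) hpos
    exact mul_le_mul_of_nonneg_left (hmono hy (hy.trans ht) (le_of_lt ht))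
      (rpow_nonneg (hy.trans ht).le _)
  · rw [← hscale]
    refine mul_le_mul_of_nonneg_left (setIntegral_mono_on hint (hpow.mul_const _)
      measurableSet_Ioi fun t ht => ?_) hpos
    exact mul_le_mul_of_nonneg_left (hmono.le_of_tendsto_Ioi hlim (hy.trans ht))
      (rpow_nonneg (hy.trans ht).le _)

theorem tendsto_rpow_mul_integral_Ioi_rpow_neg_add_one_mul (hp : 0 < p)
    (hmono : MonotoneOn h (Ioi 0)) (hlim : Tendsto h atTop (𝓝 L)) :
    Tendsto (fun y => y ^ p * ∫ t in Ioi y, t ^ (-(p + 1)) * h t) atTop (𝓝 (L / p)) :=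
  tendsto_of_tendsto_of_tendsto_of_le_of_le' (hlim.div_const p) tendsto_const_nhds
    ((eventually_gt_atTop 0).mono fun _ hy =>
      (rpow_mul_integral_Ioi_mem_Icc hp hmono hlim hy).1)
    ((eventually_gt_atTop 0).mono fun _ hy =>
      (rpow_mul_integral_Ioi_mem_Icc hp hmono hlim hy).2)

end RegularVariation

section GLMGA

variable {σ b : ℝ}

lemma glmga_eq_const_mul (a : ℝ) (hb : 0 ≤ b) {t : ℝ} (ht : 0 < t) :
    glmga σ a b t = (2 * b) ^ a / (σ * betaFn a (1 / 2)) *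
      (t ^ (-(1 / (2 * σ) + 1)) * (t ^ (-1 / σ) + 2 * b) ^ (-(a + 1 / 2))) := by
  rw [glmga, rpow_neg (x := t ^ (-1 / σ) + 2 * b) (by positivity)]
  ring

lemma monotoneOn_rpow_neg_add_rpow_neg (hσ : 0 < σ) (hb : 0 ≤ b) {q : ℝ} (hq : 0 ≤ q) :
    MonotoneOn (fun t => (t ^ (-1 / σ) + 2 * b) ^ (-q)) (Ioi 0) := by
  intro s hs t ht hst
  have hexp : -1 / σ ≤ 0 := div_nonpos_of_nonpos_of_nonneg (by norm_num) hσ.le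
  have hts : t ^ (-1 / σ) ≤ s ^ (-1 / σ) := rpow_le_rpow_of_nonpos hs hst hexp
  exact rpow_le_rpow_of_nonpos (add_pos_of_pos_of_nonneg (rpow_pos_of_pos ht _) (by positivity))
    (by linarith) (neg_nonpos.mpr hq)

lemma tendsto_rpow_neg_add_rpow_neg (hσ : 0 < σ) (hb : 0 < b) (q : ℝ) :
    Tendsto (fun t => (t ^ (-1 / σ) + 2 * b) ^ (-q)) atTop (𝓝 ((2 * b) ^ (-q))) := by
  have hzero : Tendsto (fun t : ℝ => t ^ (-1 / σ)) atTop (𝓝 0) := by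
    simpa only [neg_div] using tendsto_rpow_neg_atTop (one_div_pos.mpr hσ)
  simpa only [zero_add] using (hzero.add_const (2 * b)).rpow_const (Or.inl (by positivity))

lemma glmga_tail_constant (a : ℝ) (hσ : σ ≠ 0) (hb : 0 < b) :
    (2 * b) ^ a / (σ * betaFn a (1 / 2)) * ((2 * b) ^ (-(a + 1 / 2)) / (1 / (2 * σ))) =
      2 / ((2 * b) ^ ((1 : ℝ) / 2) * betaFn a (1 / 2)) := by
  have h2b : 0 < 2 * b := by positivity
  have hsplit : (2 * b) ^ (-(a + 1 / 2)) = (2 * b) ^ (-a) * ((2 * b) ^ ((1 : ℝ) / 2))⁻¹ := by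
    rw [← rpow_neg h2b.le, ← rpow_add h2b]
    ring_nf
  rw [hsplit, rpow_neg h2b.le]
  have : (2 * b) ^ a ≠ 0 := (rpow_pos_of_pos h2b a).ne'
  field_simp

end GLMGA

/-- first-order Pareto-type tail behaviour of the GLMGA distribution. -/
theorem glmga_tail_first_order (σ a b : ℝ) (hσ : 0 < σ) (ha : 0 < a) (hb : 0 < b) :
    Tendsto (fun y : ℝ => y ^ (1 / (2 * σ)) * ∫ t in Set.Ioi y, glmga σ a b t)
      atTop (𝓝 (2 / ((2 * b) ^ ((1:ℝ) / 2) * betaFn a (1 / 2)))) := by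
  have hp : 0 < 1 / (2 * σ) := by positivity
  have hlim := (tendsto_rpow_mul_integral_Ioi_rpow_neg_add_one_mul hp
    (monotoneOn_rpow_neg_add_rpow_neg hσ hb.le (by positivity : 0 ≤ a + 1 / 2))
    (tendsto_rpow_neg_add_rpow_neg hσ hb _)).const_mul ((2 * b) ^ a / (σ * betaFn a (1 / 2)))
  rw [glmga_tail_constant a hσ.ne' hb] at hlim
  refine hlim.congr' ((eventually_gt_atTop 0).mono fun y hy => ?_)
  dsimp only
  rw [setIntegral_congr_fun measurableSet_Ioi fun t ht => glmga_eq_const_mul a hb.le (hy.trans ht),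
    integral_const_mul]
  ring
end

section
/- Half-normal stochastic representation of the GLMGA distribution: for all σ, a, b > 0, let μ be the product of the standard half-normal measure on ℝ (density √(2/π)·e^{-x²/2} on (0,∞)) and the Gamma(a, 1) measure on ℝ. Then for every t > 0, μ{ (x, y) : (y/(b x²))^σ ≤ t } = 1 − I_{1/2,a}( t^{-1/σ}/(t^{-1/σ} + 2b) ); that is, if X is standard half-normal and Y ~ Gamma(a,1) are independent, then (Y/(bX²))^σ follows the GLMGA(σ,a,b) distribution. -/
/-!
If `X` is standard half-normal then `X²/2 ~ Gamma(1/2, 1)`, and on the positive quadrant the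
event `(Y / (b X²))^σ ≤ t` reads `Y ≤ k · X²/2` with `k = 2 b t^(1/σ)`. For independent
`U ~ Gamma(α, 1)` and `Y ~ Gamma(β, 1)`, conditioning on `Y` and substituting `u = y s` shows that
`U / Y` has the beta-prime density `s^(α-1) (1+s)^(-(α+β)) / B(α, β)`; the substitution
`s = w / (1 - w)` then turns `P(Y ≤ k U) = P(U / Y ≥ 1 / k)` into the `Beta(α, β)` mass of
`[1 / (1 + k), 1)`, which is `1 - I_{α,β}(1 / (1 + k))`.
-/

open MeasureTheory Real Filter Topology

/-- The standard half-normal measure on `ℝ`, with density `√(2/π) e^(-x²/2)` on `(0,∞)`. -/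
noncomputable def halfNormalMeasure : Measure ℝ :=
  volume.withDensity fun x =>
    ENNReal.ofReal (if 0 < x then Real.sqrt (2 / π) * Real.exp (-x ^ 2 / 2) else 0)

open ProbabilityTheory Set
open scoped ENNReal

lemma halfNormalMeasure_eq_withDensity :
    halfNormalMeasure = (volume.restrict (Ioi 0)).withDensity
      fun x => ENNReal.ofReal (√(2 / π) * exp (-x ^ 2 / 2)) := by
  rw [halfNormalMeasure, ← withDensity_indicator measurableSet_Ioi]
  congr with x
  by_cases hx : 0 < x <;> simp [hx]

lemma gammaMeasure_eq_withDensity (a r : ℝ) :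
    gammaMeasure a r = (volume.restrict (Ioi 0)).withDensity (gammaPDF a r) := by
  rw [gammaMeasure, restrict_Ioi_eq_restrict_Ici, ← withDensity_indicator measurableSet_Ici]
  congr with x
  rcases lt_or_ge x 0 with hx | hx
  · simp [gammaPDF_of_neg hx, hx.not_ge]
  · simp [hx]

lemma betaMeasure_eq_withDensity (α β : ℝ) :
    betaMeasure α β = (volume.restrict (Ioo 0 1)).withDensity (betaPDF α β) := by
  rw [betaMeasure, ← withDensity_indicator measurableSet_Ioo]
  congr with x
  by_cases hx : x ∈ Ioo 0 1
  · simp [hx]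
  · simp [betaPDF_eq, hx, show ¬ (0 < x ∧ x < 1) from hx]

@[fun_prop]
lemma measurable_gammaPDF (a r : ℝ) : Measurable (gammaPDF a r) :=
  (measurable_gammaPDFReal a r).ennreal_ofReal

lemma ae_withDensity_restrict_mem {X : Type*} [MeasurableSpace X] {μ : Measure X} {s : Set X}
    (hs : MeasurableSet s) (f : X → ℝ≥0∞) :
    ∀ᵐ x ∂(μ.restrict s).withDensity f, x ∈ s :=
  (withDensity_absolutelyContinuous _ _).ae_le (ae_restrict_mem hs)

lemma lintegral_rpow_mul_exp_neg_mul_Ioi {p r : ℝ} (hp : 0 < p) (hr : 0 < r) :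
    ∫⁻ y in Ioi 0, ENNReal.ofReal (y ^ (p - 1) * exp (-(r * y)))
      = ENNReal.ofReal (Gamma p / r ^ p) := by
  have hc : 0 < r ^ p / Gamma p := div_pos (rpow_pos_of_pos hr p) (Gamma_pos_of_pos hp)
  have h := (isProbabilityMeasure_gammaMeasure hp hr).measure_univ
  rw [gammaMeasure_eq_withDensity, withDensity_apply _ MeasurableSet.univ, Measure.restrict_univ,
    setLIntegral_congr_fun measurableSet_Ioi fun y (hy : 0 < y) => by
      rw [gammaPDF_of_nonneg hy.le, mul_assoc, ENNReal.ofReal_mul hc.le],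
    lintegral_const_mul' _ _ ENNReal.ofReal_ne_top] at h
  rw [ENNReal.eq_inv_of_mul_eq_one_left (a := ∫⁻ y in Ioi 0, _) (by rwa [mul_comm]),
    ← ENNReal.ofReal_inv_of_pos hc, inv_div]

lemma intervalIntegral_rpow_mul_one_sub_rpow {m n v : ℝ} (hm : 0 < m) (hn : 0 < n)
    (hv0 : 0 ≤ v) (hv1 : v ≤ 1) :
    ∫ x in 0..v, x ^ (m - 1) * (1 - x) ^ (n - 1) = beta m n * (betaMeasure m n).real (Iio v) := by
  have hB := beta_pos hm hn
  rw [measureReal_def, betaMeasure_eq_withDensity, withDensity_apply _ measurableSet_Iio,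
    Measure.restrict_restrict measurableSet_Iio, Iio_inter_Ioo, min_eq_left hv1,
    setLIntegral_congr_fun measurableSet_Ioo fun x hx => by
      rw [betaPDF_of_pos_lt_one hx.1 (hx.2.trans_le hv1), mul_assoc,
        ENNReal.ofReal_mul (by positivity)],
    lintegral_const_mul' _ _ ENNReal.ofReal_ne_top, ENNReal.toReal_mul,
    ENNReal.toReal_ofReal (by positivity), ← integral_eq_lintegral_of_nonneg_ae,
    intervalIntegral.integral_of_le hv0, integral_Ioc_eq_integral_Ioo]
  · field_simp
  · filter_upwards [ae_restrict_mem measurableSet_Ioo] with x hx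
    exact mul_nonneg (rpow_nonneg hx.1.le _) (rpow_nonneg (by linarith [hx.2]) _)
  · exact Measurable.aestronglyMeasurable (by fun_prop)

lemma regIncBeta_eq_betaMeasure_real_Iio {m n v : ℝ} (hm : 0 < m) (hn : 0 < n)
    (hv0 : 0 ≤ v) (hv1 : v ≤ 1) :
    regIncBeta m n v = (betaMeasure m n).real (Iio v) := by
  have := isProbabilityMeasureBeta hm hn
  have hIio_one : (betaMeasure m n).real (Iio 1) = 1 := by
    have : betaMeasure m n (Iio 1) = betaMeasure m n univ := by
      rw [betaMeasure_eq_withDensity, withDensity_apply _ measurableSet_Iio,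
        withDensity_apply _ MeasurableSet.univ, Measure.restrict_univ,
        Measure.restrict_restrict measurableSet_Iio, Iio_inter_Ioo, min_self]
    rw [measureReal_def, this, measure_univ, ENNReal.toReal_one]
  rw [regIncBeta, betaFn, intervalIntegral_rpow_mul_one_sub_rpow hm hn hv0 hv1,
    intervalIntegral_rpow_mul_one_sub_rpow hm hn zero_le_one le_rfl, hIio_one, mul_one,
    mul_div_cancel_left₀ _ (beta_pos hm hn).ne']

lemma betaMeasure_Ici {m n v : ℝ} (hm : 0 < m) (hn : 0 < n) (hv0 : 0 ≤ v) (hv1 : v ≤ 1) :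
    betaMeasure m n (Ici v) = ENNReal.ofReal (1 - regIncBeta m n v) := by
  have := isProbabilityMeasureBeta hm hn
  rw [regIncBeta_eq_betaMeasure_real_Iio hm hn hv0 hv1,
    ← probReal_compl_eq_one_sub measurableSet_Iio, compl_Iio, ofReal_measureReal]

lemma setLIntegral_Ici_mul_left {y : ℝ} (hy : 0 < y) (q : ℝ) (g : ℝ → ℝ≥0∞) :
    ∫⁻ u in Ici (y * q), g u = ∫⁻ s in Ici q, ENNReal.ofReal y * g (y * s) := by
  rw [← image_mul_left_Ici hy, lintegral_image_eq_lintegral_abs_deriv_mul measurableSet_Ici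
    (fun s _ => by simpa using ((hasDerivAt_id s).const_mul y).hasDerivWithinAt)
    (mul_right_injective₀ hy.ne').injOn]
  simp [abs_of_pos hy]

lemma setLIntegral_Ici_div_one_sub {v : ℝ} (hv : v < 1) (g : ℝ → ℝ≥0∞) :
    ∫⁻ s in Ici (v / (1 - v)), g s
      = ∫⁻ w in Ico v 1, ENNReal.ofReal (1 / (1 - w) ^ 2) * g (w / (1 - w)) := by
  have h1v : 0 < 1 - v := by linarith
  have himage : (fun w => w / (1 - w)) '' Ico v 1 = Ici (v / (1 - v)) := by
    ext s
    simp only [mem_image, mem_Ico, mem_Ici]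
    constructor
    · rintro ⟨w, ⟨hvw, hw1⟩, rfl⟩
      rw [div_le_div_iff₀ h1v (by linarith)]
      nlinarith
    · intro hs
      have hvs := (div_le_iff₀ h1v).1 hs
      have h1s : 0 < 1 + s := by nlinarith
      refine ⟨s / (1 + s), ⟨?_, (div_lt_one h1s).2 (by linarith)⟩, ?_⟩
      · rw [le_div_iff₀ h1s]
        nlinarith
      · field_simp
        ring
  have hderiv : ∀ w ∈ Ico v 1,
      HasDerivWithinAt (fun w => w / (1 - w)) (1 / (1 - w) ^ 2) (Ico v 1) w := by
    intro w hw
    have h1w : 1 - w ≠ 0 := by linarith [hw.2]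
    refine (((hasDerivAt_id' w).div ((hasDerivAt_id' w).const_sub 1) h1w).congr_deriv
      ?_).hasDerivWithinAt
    field_simp
    ring
  have hinj : InjOn (fun w => w / (1 - w)) (Ico v 1) := by
    intro w hw z hz hwz
    have h1w : 1 - w ≠ 0 := by linarith [hw.2]
    have h1z : 1 - z ≠ 0 := by linarith [hz.2]
    field_simp at hwz
    linarith
  rw [← himage, lintegral_image_eq_lintegral_abs_deriv_mul measurableSet_Ico hderiv hinj]
  refine setLIntegral_congr_fun measurableSet_Ico fun w _ => ?_
  rw [abs_of_nonneg (by positivity)]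

lemma map_halfNormalMeasure_sq_div_two :
    halfNormalMeasure.map (fun x => x ^ 2 / 2) = gammaMeasure (1 / 2) 1 := by
  have hdens : ∀ x : ℝ, 0 < x → √(2 / π) * exp (-x ^ 2 / 2)
      = |x| * (1 ^ (1 / 2 : ℝ) / Gamma (1 / 2) * (x ^ 2 / 2) ^ (1 / 2 - 1 : ℝ)
          * exp (-(1 * (x ^ 2 / 2)))) := by
    intro x hx
    have hsq : (x ^ 2 / 2) ^ (1 / 2 - 1 : ℝ) = √2 / x := by
      rw [show (1 / 2 - 1 : ℝ) = -(1 / 2) by norm_num, rpow_neg (by positivity), ← sqrt_eq_rpow,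
        sqrt_div' _ zero_le_two, sqrt_sq hx.le, inv_div]
    rw [hsq, Gamma_one_half_eq, one_rpow, abs_of_pos hx, sqrt_div' _ pi_pos.le]
    field_simp
  have hf : Measurable fun x : ℝ => x ^ 2 / 2 := by fun_prop
  have himage : (fun x : ℝ => x ^ 2 / 2) '' Ioi 0 = Ioi 0 := by
    refine Subset.antisymm
      (image_subset_iff.2 fun x (hx : 0 < x) => show 0 < x ^ 2 / 2 by positivity)
      fun u (hu : 0 < u) => ⟨√(2 * u), sqrt_pos.2 (by positivity), ?_⟩
    change √(2 * u) ^ 2 / 2 = u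
    rw [sq_sqrt (by positivity)]
    ring
  ext s hs
  rw [Measure.map_apply hf hs, halfNormalMeasure_eq_withDensity, gammaMeasure_eq_withDensity,
    withDensity_apply _ (hf hs), withDensity_apply _ hs, Measure.restrict_restrict (hf hs),
    Measure.restrict_restrict hs]
  conv_rhs => rw [← himage, ← image_preimage_inter]
  rw [lintegral_image_eq_lintegral_abs_deriv_mul ((hf hs).inter measurableSet_Ioi) (f' := id)]
  · exact setLIntegral_congr_fun ((hf hs).inter measurableSet_Ioi) fun x hx => by
      rw [id_eq, gammaPDF_of_nonneg (by positivity), ← ENNReal.ofReal_mul (abs_nonneg x),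
        ← hdens x hx.2]
  · intro x _
    simpa using ((hasDerivAt_pow 2 x).div_const 2).hasDerivWithinAt
  · intro x hx y hy hxy
    exact (pow_left_inj₀ hx.2.le hy.2.le two_ne_zero).1 (by simpa using hxy)

instance isProbabilityMeasure_halfNormalMeasure : IsProbabilityMeasure halfNormalMeasure := by
  have := isProbabilityMeasure_gammaMeasure (a := 1 / 2) (r := 1) (by norm_num) one_pos
  rw [← map_halfNormalMeasure_sq_div_two] at this
  exact Measure.isProbabilityMeasure_of_map fun x : ℝ => x ^ 2 / 2

lemma gammaMeasure_Ici_mul {a r y : ℝ} (hy : 0 < y) (q : ℝ) :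
    gammaMeasure a r (Ici (y * q))
      = ∫⁻ s in Ici q, ENNReal.ofReal y * gammaPDF a r (y * s) := by
  rw [gammaMeasure, withDensity_apply _ measurableSet_Ici, setLIntegral_Ici_mul_left hy]

lemma lintegral_gammaPDF_mul_gammaPDF_comp_mul {α β s : ℝ} (hα : 0 < α) (hβ : 0 < β)
    (hs : 0 < s) :
    ∫⁻ y in Ioi 0, gammaPDF β 1 y * (ENNReal.ofReal y * gammaPDF α 1 (y * s))
      = ENNReal.ofReal (s ^ (α - 1) * (1 + s) ^ (-(α + β)) / beta α β) := by
  have hGα := Gamma_pos_of_pos hα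
  have hGβ := Gamma_pos_of_pos hβ
  have hintegrand : ∀ y ∈ Ioi (0 : ℝ),
      gammaPDF β 1 y * (ENNReal.ofReal y * gammaPDF α 1 (y * s))
        = ENNReal.ofReal (s ^ (α - 1) / (Gamma α * Gamma β))
          * ENNReal.ofReal (y ^ (α + β - 1) * exp (-((1 + s) * y))) := by
    intro y (hy : 0 < y)
    rw [gammaPDF_of_nonneg hy.le, gammaPDF_of_nonneg (by positivity),
      ← ENNReal.ofReal_mul hy.le, ← ENNReal.ofReal_mul (by positivity),
      ← ENNReal.ofReal_mul (by positivity),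
      mul_rpow hy.le hs.le, show α + β - 1 = (β - 1) + 1 + (α - 1) by ring, rpow_add hy,
      rpow_add hy, rpow_one, one_rpow, one_rpow,
      show -((1 + s) * y) = -(1 * y) + -(1 * (y * s)) by ring, exp_add]
    congr 1
    field_simp
  rw [setLIntegral_congr_fun measurableSet_Ioi hintegrand,
    lintegral_const_mul' _ _ ENNReal.ofReal_ne_top,
    lintegral_rpow_mul_exp_neg_mul_Ioi (by linarith) (by linarith),
    ← ENNReal.ofReal_mul (by positivity), rpow_neg (by linarith), beta]
  congr 1
  field_simp

lemma ofReal_mul_betaPrime_density_eq_betaPDF {α β w : ℝ} (hw0 : 0 < w) (hw1 : w < 1) :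
    ENNReal.ofReal (1 / (1 - w) ^ 2)
        * ENNReal.ofReal ((w / (1 - w)) ^ (α - 1) * (1 + w / (1 - w)) ^ (-(α + β)) / beta α β)
      = betaPDF α β w := by
  have h1w : 0 < 1 - w := by linarith
  have hsplit : (1 - w) ^ (α + β) = (1 - w) ^ 2 * (1 - w) ^ (α - 1) * (1 - w) ^ (β - 1) := by
    rw [← rpow_two, ← rpow_add h1w, ← rpow_add h1w]
    ring_nf
  rw [betaPDF_of_pos_lt_one hw0 hw1, ← ENNReal.ofReal_mul (by positivity),
    show 1 + w / (1 - w) = (1 - w)⁻¹ by field_simp; ring, div_rpow hw0.le h1w.le,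
    inv_rpow h1w.le, rpow_neg h1w.le, inv_inv, hsplit]
  congr 1
  field_simp

lemma gammaMeasure_prod_le_mul_eq_setLIntegral {α β k : ℝ} (hα : 0 < α) (hβ : 0 < β)
    (hk : 0 < k) :
    (gammaMeasure α 1).prod (gammaMeasure β 1) {p | p.2 ≤ k * p.1}
      = ∫⁻ s in Ici (1 / k),
          ENNReal.ofReal (s ^ (α - 1) * (1 + s) ^ (-(α + β)) / beta α β) := by
  have := isProbabilityMeasure_gammaMeasure hα one_pos
  have := isProbabilityMeasure_gammaMeasure hβ one_pos
  have hS : MeasurableSet {p : ℝ × ℝ | p.2 ≤ k * p.1} :=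
    measurableSet_le (by fun_prop) (by fun_prop)
  have hslice : ∀ y,
      (fun u => (u, y)) ⁻¹' {p : ℝ × ℝ | p.2 ≤ k * p.1} = Ici (y * (1 / k)) := by
    intro y
    ext u
    rw [mem_Ici, mul_one_div, div_le_iff₀ hk, mul_comm]
    rfl
  calc (gammaMeasure α 1).prod (gammaMeasure β 1) {p | p.2 ≤ k * p.1}
      = ∫⁻ y in Ioi 0, gammaPDF β 1 y
          * ∫⁻ s in Ici (1 / k), ENNReal.ofReal y * gammaPDF α 1 (y * s) := by
        rw [Measure.prod_apply_symm hS, gammaMeasure_eq_withDensity β,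
          lintegral_withDensity_eq_lintegral_mul _ (measurable_gammaPDF β 1)
            (measurable_measure_prodMk_right hS)]
        exact setLIntegral_congr_fun measurableSet_Ioi fun y hy => by
          rw [Pi.mul_apply, hslice, gammaMeasure_Ici_mul hy]
    _ = ∫⁻ s in Ici (1 / k), ∫⁻ y in Ioi 0,
          gammaPDF β 1 y * (ENNReal.ofReal y * gammaPDF α 1 (y * s)) := by
        rw [← lintegral_lintegral_swap (by fun_prop)]
        exact setLIntegral_congr_fun measurableSet_Ioi fun y _ =>
          (lintegral_const_mul' _ _ ENNReal.ofReal_ne_top).symm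
    _ = _ := setLIntegral_congr_fun measurableSet_Ici fun s hs =>
          lintegral_gammaPDF_mul_gammaPDF_comp_mul hα hβ ((one_div_pos.2 hk).trans_le hs)

lemma gammaMeasure_prod_gammaMeasure_le_mul {α β k : ℝ} (hα : 0 < α) (hβ : 0 < β)
    (hk : 0 < k) :
    (gammaMeasure α 1).prod (gammaMeasure β 1) {p | p.2 ≤ k * p.1}
      = betaMeasure α β (Ici (1 / (1 + k))) := by
  have hq : 1 / (1 + k) / (1 - 1 / (1 + k)) = 1 / k := by
    rw [one_sub_div (by positivity), add_sub_cancel_left,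
      div_div_div_cancel_right₀ (by positivity)]
  set v := 1 / (1 + k)
  have hv0 : 0 < v := by positivity
  have hv1 : v < 1 := by rw [div_lt_one (by linarith)]; linarith
  have hIco : Ici v ∩ Ioo 0 1 = Ico v 1 :=
    Set.ext fun w => ⟨fun h => ⟨h.1, h.2.2⟩, fun h => ⟨h.1, hv0.trans_le h.1, h.2⟩⟩
  rw [gammaMeasure_prod_le_mul_eq_setLIntegral hα hβ hk, ← hq, setLIntegral_Ici_div_one_sub hv1,
    betaMeasure_eq_withDensity, withDensity_apply _ measurableSet_Ici,
    Measure.restrict_restrict measurableSet_Ici, hIco]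
  exact setLIntegral_congr_fun measurableSet_Ico fun w hw =>
    ofReal_mul_betaPrime_density_eq_betaPDF (hv0.trans_le hw.1) hw.2

/-- Off the positive quadrant the two sets differ (`rpow` at negative bases is junk), but the
quadrant has full measure. -/
lemma glmga_event_ae_eq {σ a b t : ℝ} (hσ : 0 < σ) (hb : 0 < b) (ht : 0 < t) :
    {p : ℝ × ℝ | (p.2 / (b * p.1 ^ 2)) ^ σ ≤ t}
      =ᵐ[halfNormalMeasure.prod (gammaMeasure a 1)]
        Prod.map (fun x => x ^ 2 / 2) id ⁻¹' {p | p.2 ≤ 2 * b * t ^ σ⁻¹ * p.1} := by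
  have hx : ∀ᵐ x ∂halfNormalMeasure, 0 < x := by
    rw [halfNormalMeasure_eq_withDensity]
    exact ae_withDensity_restrict_mem measurableSet_Ioi _
  have hy : ∀ᵐ y ∂gammaMeasure a 1, 0 < y := by
    rw [gammaMeasure_eq_withDensity]
    exact ae_withDensity_restrict_mem measurableSet_Ioi _
  refine eventuallyEq_set.2 ?_
  filter_upwards [Measure.quasiMeasurePreserving_fst.ae hx,
    Measure.quasiMeasurePreserving_snd.ae hy] with p hp1 hp2
  change (p.2 / (b * p.1 ^ 2)) ^ σ ≤ t ↔ p.2 ≤ 2 * b * t ^ σ⁻¹ * (p.1 ^ 2 / 2)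
  rw [← le_rpow_inv_iff_of_pos (by positivity) ht.le hσ, div_le_iff₀ (by positivity)]
  ring_nf

/-- half-normal stochastic representation of the GLMGA distribution. -/
theorem glmga_half_normal_representation (σ a b : ℝ) (hσ : 0 < σ) (ha : 0 < a)
    (hb : 0 < b) (t : ℝ) (ht : 0 < t) :
    (halfNormalMeasure.prod (ProbabilityTheory.gammaMeasure a 1))
        {p : ℝ × ℝ | (p.2 / (b * p.1 ^ 2)) ^ σ ≤ t}
      = ENNReal.ofReal
          (1 - regIncBeta (1 / 2) a (t ^ (-1 / σ) / (t ^ (-1 / σ) + 2 * b))) := by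
  have := isProbabilityMeasure_gammaMeasure ha one_pos
  have hk : 0 < 2 * b * t ^ σ⁻¹ := by positivity
  have hv : 1 / (1 + 2 * b * t ^ σ⁻¹) = t ^ (-1 / σ) / (t ^ (-1 / σ) + 2 * b) := by
    rw [neg_div, rpow_neg ht.le, one_div σ]
    field_simp
  rw [measure_congr (glmga_event_ae_eq hσ hb ht),
    ← Measure.map_apply (by fun_prop) (measurableSet_le (by fun_prop) (by fun_prop)),
    ← Measure.map_prod_map _ _ (by fun_prop) measurable_id, map_halfNormalMeasure_sq_div_two,
    Measure.map_id, gammaMeasure_prod_gammaMeasure_le_mul (by norm_num) ha hk, hv,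
    betaMeasure_Ici (by norm_num) ha (by positivity) ((div_le_one (by positivity)).2 (by linarith))]
end

section
/- Limiting density of the GLMGA distribution as a → ∞: for all σ > 0, φ > 0 and every fixed y > 0, setting b = b(a) = (a/2)·φ^{1/σ}, one has lim_{a→∞} f_{σ,a,b(a)}(y) = 1/( σ·√π·φ^{1/(2σ)} ) · y^{-1/(2σ) − 1} · exp( −(φ·y)^{-1/σ} ), the density of the generalized inverse gamma distribution with shape parameters 1/2 and 1/σ and scale parameter φ. -/
/-!
With `2b = a φ^(1/σ)` and `t = (φ y)^(-1/σ)`, the density factors as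
`y^(-1/(2σ) - 1) φ^(-1/(2σ)) / (σ √a B(a, 1/2)) · (1 + t/a)^(-(a + 1/2))`.
The last factor tends to `exp (-t)`, and
`√a B(a, 1/2) = √π · √a Γ(a) / Γ(a + 1/2) → √π`: log-convexity of `Γ` gives
`Γ(s + 1/2) ≤ √s Γ(s)`, which at `s = a` and `s = a + 1/2` squeezes `Γ(a + 1/2) / Γ(a)`
between `a / √(a + 1/2)` and `√a`.
-/

open MeasureTheory Real Filter Topology

namespace Real

theorem Gamma_add_half_le_sqrt_mul_Gamma {s : ℝ} (hs : 0 < s) :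
    Gamma (s + 1 / 2) ≤ √s * Gamma s := by
  have hΓ := Gamma_pos_of_pos hs
  calc Gamma (s + 1 / 2) = Gamma (1 / 2 * s + 1 / 2 * (s + 1)) := by ring_nf
    _ ≤ Gamma s ^ (1 / 2 : ℝ) * Gamma (s + 1) ^ (1 / 2 : ℝ) :=
      Gamma_mul_add_mul_le_rpow_Gamma_mul_rpow_Gamma hs (by linarith) (by norm_num)
        (by norm_num) (by norm_num)
    _ = √s * Gamma s := by
      rw [← sqrt_eq_rpow, ← sqrt_eq_rpow, ← sqrt_mul hΓ.le, Gamma_add_one hs.ne',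
        show Gamma s * (s * Gamma s) = s * Gamma s ^ 2 by ring, sqrt_mul hs.le,
        sqrt_sq hΓ.le]

theorem tendsto_sqrt_mul_Gamma_div_Gamma_add_half :
    Tendsto (fun a : ℝ => √a * Gamma a / Gamma (a + 1 / 2)) atTop (𝓝 1) := by
  have lower : ∀ᶠ a : ℝ in atTop, 1 ≤ √a * Gamma a / Gamma (a + 1 / 2) := by
    filter_upwards [eventually_gt_atTop 0] with a ha
    rw [one_le_div (Gamma_pos_of_pos (by linarith))]
    exact Gamma_add_half_le_sqrt_mul_Gamma ha
  have upper : ∀ᶠ a : ℝ in atTop,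
      √a * Gamma a / Gamma (a + 1 / 2) ≤ √(1 + (2 * a)⁻¹) := by
    filter_upwards [eventually_gt_atTop 0] with a ha
    have hΓ : 0 < Gamma (a + 1 / 2) := Gamma_pos_of_pos (by linarith)
    have h := Gamma_add_half_le_sqrt_mul_Gamma (s := a + 1 / 2) (by linarith)
    rw [add_assoc, add_halves, Gamma_add_one ha.ne'] at h
    rw [div_le_iff₀ hΓ, show 1 + (2 * a)⁻¹ = (a + 1 / 2) / a by field_simp,
      sqrt_div' _ ha.le]
    calc √a * Gamma a = a * Gamma a / √a := by
          rw [eq_div_iff (by positivity), mul_right_comm, mul_self_sqrt ha.le]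
      _ ≤ √(a + 1 / 2) * Gamma (a + 1 / 2) / √a := by gcongr
      _ = √(a + 1 / 2) / √a * Gamma (a + 1 / 2) := by ring
  have bound : Tendsto (fun a : ℝ => √(1 + (2 * a)⁻¹)) atTop (𝓝 1) := by
    simpa using ((tendsto_inv_atTop_zero.comp (tendsto_id.const_mul_atTop two_pos)).const_add
      1).sqrt
  exact tendsto_of_tendsto_of_tendsto_of_le_of_le' tendsto_const_nhds bound lower upper

end Real

theorem betaFn_eq_Gamma_mul_Gamma_div {m n : ℝ} (hm : 0 < m) (hn : 0 < n) :
    betaFn m n = Gamma m * Gamma n / Gamma (m + n) := by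
  have h : (betaFn m n : ℂ) = Complex.betaIntegral m n := by
    rw [betaFn, ← intervalIntegral.integral_ofReal, Complex.betaIntegral]
    refine intervalIntegral.integral_congr fun x hx => ?_
    rw [Set.uIcc_of_le zero_le_one] at hx
    simp only [Complex.ofReal_mul, Complex.ofReal_cpow hx.1,
      Complex.ofReal_cpow (sub_nonneg.2 hx.2)]
    push_cast
    ring_nf
  rw [Complex.betaIntegral_eq_Gamma_mul_div _ _ (by simpa) (by simpa), ← Complex.ofReal_add,
    Complex.Gamma_ofReal, Complex.Gamma_ofReal, Complex.Gamma_ofReal] at h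
  exact_mod_cast h

theorem tendsto_sqrt_mul_betaFn_one_half :
    Tendsto (fun a : ℝ => √a * betaFn a (1 / 2)) atTop (𝓝 √π) := by
  have h := tendsto_sqrt_mul_Gamma_div_Gamma_add_half.const_mul √π
  rw [mul_one] at h
  refine h.congr' ?_
  filter_upwards [eventually_gt_atTop 0] with a ha
  rw [betaFn_eq_Gamma_mul_Gamma_div ha one_half_pos, Gamma_one_half_eq]
  ring

theorem tendsto_one_add_div_rpow_neg_add_exp (t c : ℝ) :
    Tendsto (fun x : ℝ => (1 + t / x) ^ (-(x + c))) atTop (𝓝 (exp (-t))) := by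
  have hbase : Tendsto (fun x : ℝ => 1 + t / x) atTop (𝓝 1) := by
    simpa using (tendsto_const_nhds.div_atTop tendsto_id).const_add (1 : ℝ)
  have h := ((tendsto_one_add_div_rpow_exp t).mul
    (hbase.rpow_const (p := c) (Or.inl one_ne_zero))).inv₀ (by positivity)
  rw [one_rpow, mul_one, ← exp_neg] at h
  refine h.congr' ?_
  have hpos : ∀ᶠ x : ℝ in atTop, 0 < 1 + t / x := hbase.eventually (lt_mem_nhds one_pos)
  filter_upwards [hpos] with x hx
  rw [rpow_neg hx.le, rpow_add hx]

theorem glmga_eq_mul_one_add_div_rpow {σ a b y : ℝ} (hb : 0 < b) (hy : 0 ≤ y) :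
    glmga σ a b y = y ^ (-(1 / (2 * σ) + 1)) / (σ * betaFn a (1 / 2))
      * (2 * b) ^ (-(1 / 2 : ℝ)) * (1 + y ^ (-1 / σ) / (2 * b)) ^ (-(a + 1 / 2)) := by
  have h2b : 0 < 2 * b := by positivity
  have hu : 0 ≤ 1 + y ^ (-1 / σ) / (2 * b) := by positivity
  have hsplit : y ^ (-1 / σ) + 2 * b = 2 * b * (1 + y ^ (-1 / σ) / (2 * b)) := by
    field_simp; ring
  rw [glmga, hsplit, mul_rpow h2b.le hu, rpow_add h2b, rpow_neg h2b.le, rpow_neg hu]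
  have : 0 < (2 * b) ^ a := rpow_pos_of_pos h2b a
  field_simp

theorem glmga_limit_density_general (σ φ y : ℝ) (hφ : 0 < φ) (hy : 0 < y) :
    Tendsto (fun a : ℝ => glmga σ a (a / 2 * φ ^ (1 / σ)) y) atTop
      (𝓝 (1 / (σ * Real.sqrt π * φ ^ (1 / (2 * σ))) * y ^ (-(1 / (2 * σ)) - 1) *
        Real.exp (-(φ * y) ^ (-1 / σ)))) := by
  set p := φ ^ (1 / σ)
  have hp : 0 < p := rpow_pos_of_pos hφ _
  have hlim := (tendsto_sqrt_mul_betaFn_one_half.inv₀ (by positivity)).const_mul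
    (y ^ (-(1 / (2 * σ) + 1)) / σ * p ^ (-(1 / 2 : ℝ))) |>.mul
      (tendsto_one_add_div_rpow_neg_add_exp (y ^ (-1 / σ) / p) (1 / 2))
  convert hlim.congr' ?_ using 2
  · have hφy : (φ * y) ^ (-1 / σ) = y ^ (-1 / σ) / p := by
      rw [mul_rpow hφ.le hy.le, neg_div, rpow_neg hφ.le, rpow_neg hy.le]
      ring
    have hpφ : p ^ (-(1 / 2 : ℝ)) = (φ ^ (1 / (2 * σ)))⁻¹ := by
      rw [← rpow_mul hφ.le, ← rpow_neg hφ.le]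
      ring_nf
    rw [hφy, hpφ]
    ring_nf
  · filter_upwards [eventually_gt_atTop 0] with a ha
    rw [glmga_eq_mul_one_add_div_rpow (by positivity) hy.le,
      show 2 * (a / 2 * p) = a * p by ring, mul_rpow ha.le hp.le, rpow_neg ha.le,
      ← sqrt_eq_rpow, mul_comm a p, ← div_div]
    ring_nf

/-- limiting density of the GLMGA distribution as `a → ∞`. -/
theorem glmga_limit_density (σ φ y : ℝ) (hσ : 0 < σ) (hφ : 0 < φ) (hy : 0 < y) :
    Tendsto (fun a : ℝ => glmga σ a (a / 2 * φ ^ (1 / σ)) y) atTop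
      (𝓝 (1 / (σ * Real.sqrt π * φ ^ (1 / (2 * σ))) * y ^ (-(1 / (2 * σ)) - 1) *
        Real.exp (-(φ * y) ^ (-1 / σ)))) :=
  glmga_limit_density_general σ φ y hφ hy
end

section
/- Moments of the generalized log-Moyal distribution: for all θ > 0, σ > 0 and every real r > 0 with rσ < 1/2, ∫_0^∞ y^r · [ √θ/(√(2π)·σ) · y^{-(1/(2σ)+1)} · exp(−(θ/2)·y^{-1/σ}) ] dy = (θ/2)^{rσ} · Γ(1/2 − rσ)/Γ(1/2). -/
open MeasureTheory Real Filter Topology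

/-! The substitution `y = x ^ (-σ)` turns the `r`-th moment of the GlogM density into
`√θ / √(2π) · ∫₀^∞ x ^ (1/2 - rσ - 1) e^{-θx/2} dx`, an Euler integral equal to
`(2/θ) ^ (1/2 - rσ) Γ(1/2 - rσ)`; since `Γ(1/2) = √π`, the constants collapse to
`(θ/2) ^ (rσ) / Γ(1/2)`. -/

noncomputable def glogMDensity (θ σ y : ℝ) : ℝ :=
  √θ / (√(2 * π) * σ) * y ^ (-(1 / (2 * σ) + 1)) * exp (-(θ / 2) * y ^ (-1 / σ))

lemma glogMDensity_rpow_neg {θ σ x : ℝ} (hσ : σ ≠ 0) (hx : 0 < x) :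
    glogMDensity θ σ (x ^ (-σ)) =
      √θ / (√(2 * π) * σ) * x ^ (1 / 2 + σ) * exp (-(θ / 2 * x)) := by
  have hexp : -σ * (-(1 / (2 * σ) + 1)) = 1 / 2 + σ := by field_simp
  have hlog : -σ * (-1 / σ) = 1 := by field_simp
  rw [glogMDensity, ← rpow_mul hx.le, ← rpow_mul hx.le, hexp, hlog, rpow_one, neg_mul]

lemma integral_rpow_mul_glogMDensity (θ : ℝ) {σ : ℝ} (hσ : 0 < σ) (r : ℝ) :
    ∫ y in Set.Ioi 0, y ^ r * glogMDensity θ σ y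
      = √θ / √(2 * π) *
          ∫ x in Set.Ioi 0, x ^ (1 / 2 - r * σ - 1) * exp (-(θ / 2 * x)) := by
  rw [← integral_comp_rpow_Ioi _ (neg_ne_zero.mpr hσ.ne'), ← integral_const_mul]
  refine setIntegral_congr_fun measurableSet_Ioi fun x (hx : 0 < x) => ?_
  have hsplit : 1 / 2 - r * σ - 1 = (-σ - 1) + -σ * r + (1 / 2 + σ) := by ring
  rw [smul_eq_mul, glogMDensity_rpow_neg hσ.ne' hx, ← rpow_mul hx.le, hsplit,
    rpow_add hx (-σ - 1 + -σ * r), rpow_add hx (-σ - 1), abs_neg, abs_of_pos hσ]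
  generalize x ^ (-σ - 1) = a, x ^ (-σ * r) = b, x ^ (1 / 2 + σ) = c
  field_simp

lemma sqrt_div_sqrt_two_pi_mul_rpow {θ : ℝ} (hθ : 0 < θ) (s : ℝ) :
    √θ / √(2 * π) * (1 / (θ / 2)) ^ (1 / 2 - s) = (θ / 2) ^ s / √π := by
  have hθ2 : 0 < θ / 2 := by positivity
  rw [one_div, inv_rpow hθ2.le, ← rpow_neg hθ2.le, neg_sub, rpow_sub hθ2, ← sqrt_eq_rpow,
    sqrt_div hθ.le, sqrt_mul zero_le_two]
  have : √2 ≠ 0 := by positivity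
  have : √θ ≠ 0 := by positivity
  field_simp

theorem glogM_moment_general (θ σ r : ℝ) (hθ : 0 < θ) (hσ : 0 < σ)
    (hrσ : r * σ < 1 / 2) :
    ∫ y in Set.Ioi (0:ℝ),
        y ^ r * (Real.sqrt θ / (Real.sqrt (2 * π) * σ) * y ^ (-(1 / (2 * σ) + 1)) *
          Real.exp (-(θ / 2) * y ^ (-1 / σ)))
      = (θ / 2) ^ (r * σ) * Real.Gamma (1 / 2 - r * σ) / Real.Gamma (1 / 2) := by
  change ∫ y in Set.Ioi 0, y ^ r * glogMDensity θ σ y = _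
  rw [integral_rpow_mul_glogMDensity θ hσ r,
    integral_rpow_mul_exp_neg_mul_Ioi (by linarith) (by positivity), ← mul_assoc,
    sqrt_div_sqrt_two_pi_mul_rpow hθ, Gamma_one_half_eq, div_mul_eq_mul_div]

/-- moments of the generalized log-Moyal distribution. -/
theorem glogM_moment (θ σ r : ℝ) (hθ : 0 < θ) (hσ : 0 < σ) (hr : 0 < r)
    (hrσ : r * σ < 1 / 2) :
    ∫ y in Set.Ioi (0:ℝ),
        y ^ r * (Real.sqrt θ / (Real.sqrt (2 * π) * σ) * y ^ (-(1 / (2 * σ) + 1)) *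
          Real.exp (-(θ / 2) * y ^ (-1 / σ)))
      = (θ / 2) ^ (r * σ) * Real.Gamma (1 / 2 - r * σ) / Real.Gamma (1 / 2) :=
  glogM_moment_general θ σ r hθ hσ hrσ
end
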